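/- Let k ≥ 3 and r ≥ k+1 be integers, and let (V,ℬ) be an r-even-free Steiner 2-design S(2,k,v) (so |ℬ| = v(v-1)/(k(k-1))). Then the set of indicator vectors of the blocks of ℬ is a (v, v(v-1)/(k(k-1)), 1, k-1) X-code of constant weight k that is also a (v, v(v-1)/(k(k-1)), k, 1) X-code and a (v, v(v-1)/(k(k-1)), r, 0) X-code. -/

import Mathlib

/-- An `(·,·,d,x)` X-code on coordinate set `ι`. -/
def IsXCode {ι : Type*} [Fintype ι] (d x : ℕ) (X : Finset (ι → ZMod 2)) : Prop :=
  ∀ S₁ S₂ : Finset (ι → ZMod 2), S₁ ⊆ X → S₂ ⊆ X → Disjoint S₁ S₂ →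
    S₁.card ≤ x → 1 ≤ S₂.card → S₂.card ≤ d →
    ∃ j : ι, (∑ s ∈ S₂, s j) = 1 ∧ ∀ s ∈ S₁, s j = 0

/-- The weight of a vector: its number of nonzero coordinates. -/
def wt {ι : Type*} [Fintype ι] (s : ι → ZMod 2) : ℕ :=
  (Finset.univ.filter fun j => s j ≠ 0).card

/-- A configuration is even if every point lies in an even number of its blocks. -/
def IsEvenConfig {V : Type*} [DecidableEq V] (C : Finset (Finset V)) : Prop :=
  ∀ p : V, Even (C.filter fun b => p ∈ b).card

/-!
Write `d(p)` for the number of blocks of a subfamily `C` through the point `p`. The vector sum of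
the blocks of `C` is `1` exactly where `d(p)` is odd, so each X-code property asks for a point of
odd degree avoiding some further blocks. For `(r, 0)` this is `r`-even-freeness, and for
`(1, k - 1)` it holds because `k - 1` other blocks meet a block in at most `k - 1` points. For
`(k, 1)`, suppose all points of odd degree in `C` (`1 ≤ #C ≤ k`) lie on a block `b ∉ C`. Since
`insert b C` is not even, some `q ∈ b` has even degree in `C`. Two blocks share at most one point,
so `∑ d(p) (d(p) - 1) ≤ #C (#C - 1)`. Each term is at least `d(p)`, except at the `k - 1` points
of `b.erase q`, where it is at least `d(p) - 1`. Since `∑ d(p) = k #C`, this gives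
`k #C ≤ #C (#C - 1) + k - 1`, which is impossible.
-/

open Finset

variable {V : Type*} [DecidableEq V]

def indicatorVec (b : Finset V) : V → ZMod 2 := fun p => if p ∈ b then 1 else 0

def pointDegree (C : Finset (Finset V)) (p : V) : ℕ := #{b ∈ C | p ∈ b}

def IsLinearFamily (B : Finset (Finset V)) : Prop :=
  (B : Set (Finset V)).Pairwise fun b b' => #(b ∩ b') ≤ 1

structure IsSteiner2Design (k : ℕ) (B : Finset (Finset V)) : Prop where
  card_block : ∀ b ∈ B, #b = k
  existsUnique_subset : ∀ e : Finset V, #e = 2 → ∃! b, b ∈ B ∧ e ⊆ b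

def IsEvenFree (r : ℕ) (B : Finset (Finset V)) : Prop :=
  ∀ C ⊆ B, C.Nonempty → #C ≤ r → ¬ IsEvenConfig C

section Vectors

theorem indicatorVec_injective : Function.Injective (indicatorVec (V := V)) := by
  intro b b' h
  ext p
  have hp := congrFun h p
  by_cases hb : p ∈ b <;> by_cases hb' : p ∈ b' <;> simp_all [indicatorVec]

theorem sum_indicatorVec_apply (C : Finset (Finset V)) (p : V) :
    ∑ b ∈ C, indicatorVec b p = pointDegree C p :=
  sum_boole _ _

variable [Fintype V]

theorem wt_indicatorVec (b : Finset V) : wt (indicatorVec b) = #b := by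
  unfold wt indicatorVec
  congr 1
  ext p
  by_cases hp : p ∈ b <;> simp [hp]

/-- The sum of the vectors of the blocks of `C₂` is `1` exactly at the points of odd degree
in `C₂`. -/
theorem isXCode_image_indicatorVec {B : Finset (Finset V)} {d x : ℕ}
    (h : ∀ C₁ ⊆ B, ∀ C₂ ⊆ B, Disjoint C₁ C₂ → #C₁ ≤ x → C₂.Nonempty → #C₂ ≤ d →
      ∃ p, Odd (pointDegree C₂ p) ∧ ∀ b ∈ C₁, p ∉ b) :
    IsXCode d x (B.image indicatorVec) := by
  intro S₁ S₂ hS₁ hS₂ hdisj hS₁x hS₂pos hS₂d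
  obtain ⟨C₁, hC₁B, rfl⟩ := subset_image_iff.1 hS₁
  obtain ⟨C₂, hC₂B, rfl⟩ := subset_image_iff.1 hS₂
  simp only [card_image_of_injective _ indicatorVec_injective] at hS₁x hS₂pos hS₂d
  rw [disjoint_image indicatorVec_injective] at hdisj
  obtain ⟨p, hodd, hnot⟩ := h C₁ hC₁B C₂ hC₂B hdisj hS₁x (card_pos.1 hS₂pos) hS₂d
  refine ⟨p, ?_, ?_⟩
  · rw [sum_image fun _ _ _ _ hbb' => indicatorVec_injective hbb', sum_indicatorVec_apply,
      ZMod.natCast_eq_one_iff_odd]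
    exact hodd
  · simp only [mem_image, forall_exists_index, and_imp]
    rintro _ b hb rfl
    simp [indicatorVec, hnot b hb]

end Vectors

section Counting

theorem card_le_card_offDiag_add_one {α : Type*} (s : Finset α) : #s ≤ #s.offDiag + 1 := by
  rw [offDiag_card]
  zify [Nat.le_mul_self #s]
  nlinarith

theorem card_le_card_offDiag_of_even {α : Type*} {s : Finset α} (hs : Even #s) :
    #s ≤ #s.offDiag := by
  obtain ⟨c, hc⟩ := hs
  have := Nat.le_mul_self c
  rw [offDiag_card, hc]
  zify [Nat.le_mul_self (c + c)] at this ⊢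
  nlinarith

variable [Fintype V]

theorem sum_pointDegree (C : Finset (Finset V)) : ∑ p, pointDegree C p = ∑ b ∈ C, #b := by
  have := sum_card_bipartiteAbove_eq_sum_card_bipartiteBelow (fun p (b : Finset V) => p ∈ b)
    (s := univ) (t := C)
  simpa [bipartiteAbove, bipartiteBelow, pointDegree] using this

/-- Both sides count the triples `(p, b, b')` with `b ≠ b'` blocks of `C` through `p`. -/
theorem sum_card_offDiag_filter_mem (C : Finset (Finset V)) :
    ∑ p, #{b ∈ C | p ∈ b}.offDiag = ∑ x ∈ C.offDiag, #(x.1 ∩ x.2) := by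
  have := sum_card_bipartiteAbove_eq_sum_card_bipartiteBelow
    (fun p (x : Finset V × Finset V) => p ∈ x.1 ∧ p ∈ x.2) (s := univ) (t := C.offDiag)
  convert this using 3 with p _ x _
  · ext x
    simp only [mem_offDiag, mem_filter, bipartiteAbove]
    tauto
  · ext p
    simp [bipartiteBelow]

end Counting

namespace IsLinearFamily

variable {B C : Finset (Finset V)}

theorem mono (hB : IsLinearFamily B) (hCB : C ⊆ B) : IsLinearFamily C :=
  Set.Pairwise.mono (coe_subset.2 hCB) hB

theorem exists_mem_forall_notMem (hB : IsLinearFamily B) (hCB : C ⊆ B) {b : Finset V}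
    (hb : b ∈ B) (hbC : b ∉ C) (hcard : #C < #b) : ∃ p ∈ b, ∀ c ∈ C, p ∉ c := by
  by_contra! hcover
  have hmeet : #b * 1 ≤ ∑ c ∈ C, #(b ∩ c) :=
    le_sum_card_inter fun p hp => card_pos.2 <| by simpa [Finset.Nonempty] using hcover p hp
  have hsmall : ∑ c ∈ C, #(b ∩ c) ≤ ∑ _c ∈ C, 1 :=
    sum_le_sum fun c hc => hB hb (hCB hc) (ne_of_mem_of_not_mem hc hbC).symm
  simp only [mul_one, sum_const, smul_eq_mul] at hmeet hsmall
  omega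

variable [Fintype V]

theorem sum_card_offDiag_filter_mem_le (hC : IsLinearFamily C) :
    ∑ p, #{b ∈ C | p ∈ b}.offDiag ≤ #C.offDiag := by
  rw [sum_card_offDiag_filter_mem, card_eq_sum_ones]
  exact sum_le_sum fun x hx => by
    obtain ⟨hx₁, hx₂, hne⟩ := mem_offDiag.1 hx
    exact hC hx₁ hx₂ hne

theorem card_mul_le_of_even_pointDegree (hC : IsLinearFamily C) {k : ℕ}
    (hk : ∀ b ∈ C, #b = k) {s : Finset V} (heven : ∀ p ∉ s, Even (pointDegree C p)) :
    #C * k ≤ #C * (#C - 1) + #s := by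
  have hpoint (p : V) : pointDegree C p ≤ #{b ∈ C | p ∈ b}.offDiag + if p ∈ s then 1 else 0 := by
    split_ifs with hp
    · exact card_le_card_offDiag_add_one _
    · exact card_le_card_offDiag_of_even (heven p hp)
  calc #C * k = ∑ p, pointDegree C p := by
        rw [sum_pointDegree, sum_congr rfl hk, sum_const, smul_eq_mul]
    _ ≤ ∑ p, (#{b ∈ C | p ∈ b}.offDiag + if p ∈ s then 1 else 0) := sum_le_sum fun p _ => hpoint p
    _ = ∑ p, #{b ∈ C | p ∈ b}.offDiag + #s := by
        rw [sum_add_distrib, sum_boole, Nat.cast_id, filter_mem_eq_inter, univ_inter]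
    _ ≤ #C.offDiag + #s := by grw [hC.sum_card_offDiag_filter_mem_le]
    _ = #C * (#C - 1) + #s := by rw [offDiag_card, Nat.mul_sub_one]

end IsLinearFamily

namespace IsEvenFree

variable {r : ℕ} {B C : Finset (Finset V)}

theorem mono (hB : IsEvenFree r B) {r' : ℕ} (hr : r' ≤ r) : IsEvenFree r' B :=
  fun C hCB hC hCr => hB C hCB hC (hCr.trans hr)

theorem exists_odd_pointDegree (hB : IsEvenFree r B) (hCB : C ⊆ B) (hC : C.Nonempty)
    (hCr : #C ≤ r) : ∃ p, Odd (pointDegree C p) := by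
  simpa [IsEvenConfig, pointDegree] using hB C hCB hC hCr

end IsEvenFree

namespace IsSteiner2Design

variable {k : ℕ} {B : Finset (Finset V)}

theorem isLinearFamily (hB : IsSteiner2Design k B) : IsLinearFamily B := by
  intro b hb b' hb' hne
  by_contra! h
  obtain ⟨e, he, he2⟩ := exists_subset_card_eq h
  exact hne <| (hB.existsUnique_subset e he2).unique
    ⟨hb, he.trans inter_subset_left⟩ ⟨hb', he.trans inter_subset_right⟩

variable [Fintype V]

theorem card_mul_choose_two (hB : IsSteiner2Design k B) :
    #B * k.choose 2 = (Fintype.card V).choose 2 := by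
  have hcover : B.biUnion (powersetCard 2) = powersetCard 2 univ := by
    ext e
    simp only [mem_biUnion, mem_powersetCard, subset_univ, true_and]
    constructor
    · rintro ⟨_, _, _, he⟩
      exact he
    · intro he
      obtain ⟨b, ⟨hb, heb⟩, _⟩ := hB.existsUnique_subset e he
      exact ⟨b, hb, heb, he⟩
  have hdisj : (B : Set (Finset V)).PairwiseDisjoint (powersetCard 2) := by
    intro b hb b' hb' hne
    refine disjoint_left.2 fun e he he' => hne ?_
    rw [mem_powersetCard] at he he'
    exact (hB.existsUnique_subset e he.2).unique ⟨hb, he.1⟩ ⟨hb', he'.1⟩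
  rw [← card_univ, ← card_powersetCard, ← hcover, card_biUnion hdisj,
    sum_congr rfl fun b hb => by rw [card_powersetCard, hB.card_block b hb], sum_const, smul_eq_mul]

theorem card_eq_div (hB : IsSteiner2Design k B) (hk : 2 ≤ k) :
    #B = Fintype.card V * (Fintype.card V - 1) / (k * (k - 1)) := by
  have hmul := congrArg (· * 2) hB.card_mul_choose_two
  simp only [Nat.choose_two_right, mul_assoc,
    Nat.div_two_mul_two_of_even (Nat.even_mul_pred_self _)] at hmul
  exact (Nat.div_eq_of_eq_mul_left (Nat.mul_pos (by omega) (by omega)) hmul.symm).symm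

theorem exists_odd_pointDegree_notMem (hB : IsSteiner2Design k B) (hfree : IsEvenFree (k + 1) B)
    {C : Finset (Finset V)} (hCB : C ⊆ B) (hC : C.Nonempty) (hCk : #C ≤ k)
    {b : Finset V} (hb : b ∈ B) (hbC : b ∉ C) : ∃ p ∉ b, Odd (pointDegree C p) := by
  by_contra! heven
  have hdeg (p : V) : pointDegree (insert b C) p = pointDegree C p + if p ∈ b then 1 else 0 := by
    unfold pointDegree
    rw [filter_insert]
    split_ifs with hp
    · exact card_insert_of_notMem fun h => hbC (mem_filter.1 h).1
    · rfl
  obtain ⟨q, hq⟩ := hfree.exists_odd_pointDegree (insert_subset hb hCB) (insert_nonempty b C)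
    (by grw [card_insert_le, hCk])
  have hqb : q ∈ b := by
    by_contra hqb
    rw [hdeg, if_neg hqb, add_zero] at hq
    exact heven q hqb hq
  rw [hdeg, if_pos hqb, Nat.odd_add_one, Nat.not_odd_iff_even] at hq
  have hcount := (hB.isLinearFamily.mono hCB).card_mul_le_of_even_pointDegree
    (fun c hc => hB.card_block c (hCB hc)) (s := b.erase q) fun p hp => by
      by_cases hpq : p = q
      · exact hpq ▸ hq
      · exact Nat.not_odd_iff_even.1 <| heven p fun hpb => hp (mem_erase.2 ⟨hpq, hpb⟩)
  rw [card_erase_of_mem hqb, hB.card_block b hb] at hcount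
  have hCpos := hC.card_pos
  zify [hCpos, (hB.card_block b hb ▸ card_pos.2 ⟨q, hqb⟩ : 0 < k)] at hcount hCk
  nlinarith

end IsSteiner2Design

section XCodes

variable [Fintype V] {k r : ℕ} {B : Finset (Finset V)}

theorem IsEvenFree.isXCode_self_zero (hfree : IsEvenFree r B) :
    IsXCode r 0 (B.image indicatorVec) :=
  isXCode_image_indicatorVec fun C₁ _ C₂ hC₂ _ hC₁ hC₂ne hC₂r => by
    obtain ⟨p, hp⟩ := hfree.exists_odd_pointDegree hC₂ hC₂ne hC₂r
    exact ⟨p, hp, by simp [card_eq_zero.1 (Nat.le_zero.1 hC₁)]⟩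

namespace IsSteiner2Design

theorem isXCode_one_pred (hB : IsSteiner2Design k B) (hk : 0 < k) :
    IsXCode 1 (k - 1) (B.image indicatorVec) :=
  isXCode_image_indicatorVec fun C₁ hC₁ C₂ hC₂ hdisj hC₁k hC₂ne hC₂1 => by
    obtain ⟨b, rfl⟩ := card_eq_one.1 (le_antisymm hC₂1 hC₂ne.card_pos)
    have hb := hC₂ (mem_singleton_self b)
    obtain ⟨p, hpb, hp⟩ := hB.isLinearFamily.exists_mem_forall_notMem hC₁ hb
      (disjoint_singleton_right.1 hdisj) (by rw [hB.card_block b hb]; omega)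
    exact ⟨p, by simp [pointDegree, filter_singleton, hpb], hp⟩

theorem isXCode_self_one (hB : IsSteiner2Design k B) (hfree : IsEvenFree (k + 1) B) :
    IsXCode k 1 (B.image indicatorVec) :=
  isXCode_image_indicatorVec fun C₁ hC₁ C₂ hC₂ hdisj hC₁1 hC₂ne hC₂k => by
    rcases Nat.le_one_iff_eq_zero_or_eq_one.1 hC₁1 with hC₁0 | hC₁1
    · obtain ⟨p, hp⟩ := (hfree.mono k.le_succ).exists_odd_pointDegree hC₂ hC₂ne hC₂k
      exact ⟨p, hp, by simp [card_eq_zero.1 hC₁0]⟩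
    · obtain ⟨b, rfl⟩ := card_eq_one.1 hC₁1
      obtain ⟨p, hpb, hp⟩ := hB.exists_odd_pointDegree_notMem hfree hC₂ hC₂ne hC₂k
        (hC₁ (mem_singleton_self b)) (disjoint_singleton_left.1 hdisj)
      exact ⟨p, hp, by simpa using hpb⟩

end IsSteiner2Design

end XCodes

/-- For `k ≥ 3` and `r ≥ k+1`, the block indicator vectors of an `r`-even-free Steiner
2-design `S(2,k,v)` form a `(v, v(v-1)/(k(k-1)), 1, k-1)` X-code of constant weight `k`
that is also a `(v, v(v-1)/(k(k-1)), k, 1)` X-code and a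
`(v, v(v-1)/(k(k-1)), r, 0)` X-code. -/
theorem rEvenFree_steiner2_xcode (k r v : ℕ) (hk : 3 ≤ k) (hr : k + 1 ≤ r)
    (B : Finset (Finset (Fin v)))
    (hblock : ∀ b ∈ B, b.card = k)
    (hdes : ∀ p : Finset (Fin v), p.card = 2 → ∃! b, b ∈ B ∧ p ⊆ b)
    (heven : ∀ C ⊆ B, C.Nonempty → C.card ≤ r → ¬ IsEvenConfig C) :
    (B.image fun b => fun p : Fin v => if p ∈ b then (1 : ZMod 2) else 0).card
        = v * (v - 1) / (k * (k - 1)) ∧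
      (∀ s ∈ B.image fun b => fun p : Fin v => if p ∈ b then (1 : ZMod 2) else 0,
        wt s = k) ∧
      IsXCode 1 (k - 1)
        (B.image fun b => fun p : Fin v => if p ∈ b then (1 : ZMod 2) else 0) ∧
      IsXCode k 1
        (B.image fun b => fun p : Fin v => if p ∈ b then (1 : ZMod 2) else 0) ∧
      IsXCode r 0
        (B.image fun b => fun p : Fin v => if p ∈ b then (1 : ZMod 2) else 0) := by
  have hB : IsSteiner2Design k B := ⟨hblock, hdes⟩
  have hfree : IsEvenFree r B := heven
  have hvec : (fun b p => if p ∈ b then (1 : ZMod 2) else 0) = indicatorVec (V := Fin v) := rfl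
  rw [hvec]
  refine ⟨?_, ?_, hB.isXCode_one_pred (by omega),
    hB.isXCode_self_one (hfree.mono hr), hfree.isXCode_self_zero⟩
  · rw [card_image_of_injective _ indicatorVec_injective, hB.card_eq_div (by omega),
      Fintype.card_fin]
  · simp only [mem_image, forall_exists_index, and_imp]
    rintro _ b hb rfl
    rw [wt_indicatorVec, hblock b hb]
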